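/- arXiv:2003.04558 — 5 statements merged into one kernel-verified Lean document; each statement's English description precedes it below -/
import Mathlib

section
/- Let d ≥ 1 and let K := {(a,b) ∈ ℝ × ℝ^d : a + |b|²/2 ≤ 0}, where |·| is the Euclidean norm. Then for every (a,b) ∈ ℝ × ℝ^d, the support function of K at (a,b) equals B(a,b); that is, sup{a·α + ⟨b,β⟩ : (α,β) ∈ K} = B(a,b), where the supremum is taken in [0,+∞] and B(a,b) = |b|²/(2a) if a > 0, B(0,0) = 0, and B(a,b) = +∞ if a < 0 or (a = 0 and b ≠ 0). -/
open MeasureTheory ENNReal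

noncomputable section
attribute [local instance] Classical.propDecidable

/-- The convex set `K = {(a,b) : a + |b|²/2 ≤ 0} ⊆ ℝ × ℝ^d`. -/
def Kset (d : ℕ) : Set (ℝ × EuclideanSpace ℝ (Fin d)) :=
  {p | p.1 + ‖p.2‖ ^ 2 / 2 ≤ 0}

/-- The function `B : ℝ × ℝ^d → [0,∞]`, `B(a,b) = |b|²/(2a)` if `a > 0`,
`B(0,0) = 0`, and `B(a,b) = +∞` if `a < 0` or (`a = 0` and `b ≠ 0`). -/
def Bfun (d : ℕ) : ℝ × EuclideanSpace ℝ (Fin d) → ℝ≥0∞ := fun p =>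
  if 0 < p.1 then ENNReal.ofReal (‖p.2‖ ^ 2 / (2 * p.1))
  else if p.1 = 0 ∧ p.2 = 0 then 0
  else ⊤

/-!
For `a > 0` the linear functional `(α, β) ↦ a α + ⟪b, β⟫` is maximised on the paraboloid
`α + |β|²/2 ≤ 0` on its boundary, where it equals `⟪b, β⟫ - a|β|²/2 ≤ |b|²/(2a)`
(complete the square), with equality at `β = b / a`. For `a < 0` it is unbounded along
`β = 0, α → -∞`, and for `a = 0`, `b ≠ 0` along the boundary curve `β = t b`, `t → ∞`.
-/

section ENNRealSupremum

variable {α : Type*} {s : Set α} {f : α → ℝ}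

theorem ENNReal.biSup_ofReal_eq_of_isGreatest {M : ℝ} (h : IsGreatest (f '' s) M) :
    ⨆ x ∈ s, ENNReal.ofReal (f x) = ENNReal.ofReal M := by
  obtain ⟨⟨x₀, hx₀, rfl⟩, hM⟩ := h
  refine le_antisymm (iSup₂_le fun x hx => ?_) (le_iSup₂_of_le x₀ hx₀ le_rfl)
  exact ENNReal.ofReal_le_ofReal (hM ⟨x, hx, rfl⟩)

theorem ENNReal.biSup_ofReal_eq_top_of_not_bddAbove (h : ¬BddAbove (f '' s)) :
    ⨆ x ∈ s, ENNReal.ofReal (f x) = ⊤ := by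
  refine ENNReal.eq_top_of_forall_nnreal_le fun r => ?_
  obtain ⟨_, ⟨x, hx, rfl⟩, hrx⟩ := not_bddAbove_iff.mp h r
  calc (r : ℝ≥0∞) = ENNReal.ofReal r := (ENNReal.ofReal_coe_nnreal).symm
    _ ≤ ENNReal.ofReal (f x) := ENNReal.ofReal_le_ofReal hrx.le
    _ ≤ ⨆ x ∈ s, ENNReal.ofReal (f x) := le_iSup₂_of_le x hx le_rfl

end ENNRealSupremum

section Paraboloid

variable {E : Type*} [NormedAddCommGroup E] [InnerProductSpace ℝ E]

theorem mul_fst_add_inner_le_of_mem_paraboloid {a : ℝ} (ha : 0 < a) (b : E) {p : ℝ × E}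
    (hp : p.1 + ‖p.2‖ ^ 2 / 2 ≤ 0) :
    a * p.1 + inner ℝ b p.2 ≤ ‖b‖ ^ 2 / (2 * a) := by
  have h_cs : inner ℝ b p.2 ≤ ‖b‖ * ‖p.2‖ := real_inner_le_norm b p.2
  have h_fst : a * p.1 ≤ -(a * ‖p.2‖ ^ 2 / 2) := by nlinarith
  rw [le_div_iff₀ (by positivity)]
  nlinarith [sq_nonneg (a * ‖p.2‖ - ‖b‖)]

theorem isGreatest_mul_fst_add_inner_paraboloid {a : ℝ} (ha : 0 < a) (b : E) :
    IsGreatest ((fun p : ℝ × E => a * p.1 + inner ℝ b p.2) '' {p | p.1 + ‖p.2‖ ^ 2 / 2 ≤ 0})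
      (‖b‖ ^ 2 / (2 * a)) := by
  refine ⟨⟨(-(‖b‖ ^ 2 / (2 * a ^ 2)), a⁻¹ • b), ?_, ?_⟩, ?_⟩
  · simp only [Set.mem_ofPred_eq, norm_smul, norm_inv, Real.norm_of_nonneg ha.le]
    field_simp
    norm_num
  · simp only [real_inner_smul_right, real_inner_self_eq_norm_sq]
    field_simp
    ring
  · rintro _ ⟨p, hp, rfl⟩
    exact mul_fst_add_inner_le_of_mem_paraboloid ha b hp

theorem not_bddAbove_mul_fst_add_inner_paraboloid_of_neg {a : ℝ} (ha : a < 0) (b : E) :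
    ¬BddAbove ((fun p : ℝ × E => a * p.1 + inner ℝ b p.2) '' {p | p.1 + ‖p.2‖ ^ 2 / 2 ≤ 0}) := by
  refine not_bddAbove_iff.mpr fun t => ⟨_, ⟨((|t| + 1) / a, 0), ?_, rfl⟩, ?_⟩
  · simp only [Set.mem_ofPred_eq, norm_zero]
    have : (|t| + 1) / a ≤ 0 := div_nonpos_of_nonneg_of_nonpos (by positivity) ha.le
    linarith
  · simp only [inner_zero_right, add_zero, mul_div_cancel₀ _ ha.ne]
    linarith [le_abs_self t]

theorem not_bddAbove_inner_paraboloid {b : E} (hb : b ≠ 0) :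
    ¬BddAbove ((fun p : ℝ × E => 0 * p.1 + inner ℝ b p.2) '' {p | p.1 + ‖p.2‖ ^ 2 / 2 ≤ 0}) := by
  have hb2 : 0 < ‖b‖ ^ 2 := by positivity
  refine not_bddAbove_iff.mpr fun t => ?_
  set s := (|t| + 1) / ‖b‖ ^ 2
  refine ⟨_, ⟨(-(‖s • b‖ ^ 2 / 2), s • b), ?_, rfl⟩, ?_⟩
  · simp only [Set.mem_ofPred_eq]
    linarith
  · simp only [zero_mul, zero_add, real_inner_smul_right, real_inner_self_eq_norm_sq, s,
      div_mul_cancel₀ _ hb2.ne']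
    linarith [le_abs_self t]

end Paraboloid

theorem support_function_of_K_eq_B_general (d : ℕ)
    (a : ℝ) (b : EuclideanSpace ℝ (Fin d)) :
    ⨆ p ∈ Kset d, ENNReal.ofReal (a * p.1 + (inner ℝ b p.2 : ℝ)) = Bfun d (a, b) := by
  unfold Kset
  rcases lt_trichotomy a 0 with ha | rfl | ha
  · rw [ENNReal.biSup_ofReal_eq_top_of_not_bddAbove
      (not_bddAbove_mul_fst_add_inner_paraboloid_of_neg ha b)]
    simp [Bfun, not_lt.mpr ha.le, ha.ne]
  · by_cases hb : b = 0
    · simp [Bfun, hb]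
    · rw [ENNReal.biSup_ofReal_eq_top_of_not_bddAbove (not_bddAbove_inner_paraboloid hb)]
      simp [Bfun, hb]
  · rw [ENNReal.biSup_ofReal_eq_of_isGreatest (isGreatest_mul_fst_add_inner_paraboloid ha b)]
    simp [Bfun, ha]

/-- The support function of `K` (with the supremum taken in `[0,+∞]`) equals `B`. -/
theorem support_function_of_K_eq_B (d : ℕ) (hd : 1 ≤ d)
    (a : ℝ) (b : EuclideanSpace ℝ (Fin d)) :
    ⨆ p ∈ Kset d, ENNReal.ofReal (a * p.1 + (inner ℝ b p.2 : ℝ)) = Bfun d (a, b) :=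
  support_function_of_K_eq_B_general d a b

end
end

section
/- Let D ⊂ ℝ^d be compact, let ρ be a finite signed Borel measure on D and let m be a finite ℝ^d-valued Borel vector measure on D. If the action A(ρ, m) is finite, then ρ is a nonnegative measure, i.e. ρ(E) ≥ 0 for every Borel set E ⊆ D. -/
open MeasureTheory ENNReal


noncomputable section

/-- Integral of a function against a finite signed measure, via the Jordan decomposition. -/
def signedIntegral {X : Type*} [MeasurableSpace X] (ρ : SignedMeasure X) (f : X → ℝ) : ℝ :=
  (∫ x, f x ∂ρ.toJordanDecomposition.posPart) - ∫ x, f x ∂ρ.toJordanDecomposition.negPart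

/-- The action `A(ρ,m)`: the supremum, taken in `[0,∞]`, of `∫ a dρ + ∫ b·dm` over
continuous `(a,b)` with values in `K`.  Here the `ℝ^d`-valued vector measure `m` is
encoded by its `d` signed-measure components. -/
def action {X : Type*} [MeasurableSpace X] [TopologicalSpace X] {d : ℕ}
    (ρ : SignedMeasure X) (m : Fin d → SignedMeasure X) : ℝ≥0∞ :=
  ⨆ (q : C(X, ℝ × EuclideanSpace ℝ (Fin d))) (_ : ∀ x, q x ∈ Kset d),
    ENNReal.ofReal (signedIntegral ρ (fun x => (q x).1) +
      ∑ i, signedIntegral (m i) (fun x => (q x).2 i))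


/-!
Testing against `(c f, 0) ∈ K` for continuous `f ≤ 0` and arbitrarily large `c ≥ 0` shows that
a finite action forces `∫ f dρ ≤ 0` for every such `f`. Hence the negative Jordan part `ρ⁻`
integrates every nonnegative bounded continuous function to at most its `ρ⁺`-integral, so
`ρ⁻ F ≤ ρ⁺ F` on closed sets. Since `ρ⁻` is concentrated on a `ρ⁺`-null set and is inner regular
with respect to closed sets, `ρ⁻ = 0`.
-/

open scoped BoundedContinuousFunction NNReal

section Action

variable {X : Type*} [MeasurableSpace X]

theorem signedIntegral_const_mul (ρ : SignedMeasure X) (c : ℝ) (f : X → ℝ) :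
    signedIntegral ρ (fun x => c * f x) = c * signedIntegral ρ f := by
  simp only [signedIntegral, integral_const_mul, mul_sub]

theorem signedIntegral_zero (ρ : SignedMeasure X) : signedIntegral ρ (fun _ => 0) = 0 := by
  simp [signedIntegral]

variable [TopologicalSpace X] {d : ℕ}

theorem ofReal_le_action (ρ : SignedMeasure X) (m : Fin d → SignedMeasure X)
    (q : C(X, ℝ × EuclideanSpace ℝ (Fin d))) (hq : ∀ x, q x ∈ Kset d) :
    ENNReal.ofReal (signedIntegral ρ (fun x => (q x).1) +
      ∑ i, signedIntegral (m i) (fun x => (q x).2 i)) ≤ action ρ m :=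
  le_iSup₂ (f := fun (q : C(X, ℝ × EuclideanSpace ℝ (Fin d))) (_ : ∀ x, q x ∈ Kset d) =>
    ENNReal.ofReal (signedIntegral ρ (fun x => (q x).1) +
      ∑ i, signedIntegral (m i) (fun x => (q x).2 i))) q hq

theorem signedIntegral_nonpos_of_action_ne_top {ρ : SignedMeasure X}
    {m : Fin d → SignedMeasure X} (hfin : action ρ m ≠ ⊤) (f : C(X, ℝ)) (hf : ∀ x, f x ≤ 0) :
    signedIntegral ρ f ≤ 0 := by
  have scaled_le : ∀ n : ℕ, (n : ℝ) * signedIntegral ρ f ≤ (action ρ m).toReal := by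
    intro n
    let q : C(X, ℝ × EuclideanSpace ℝ (Fin d)) := ⟨fun x => ((n : ℝ) * f x, 0), by fun_prop⟩
    have hqK : ∀ x, q x ∈ Kset d := fun x => by
      simpa [Kset, q] using mul_nonpos_of_nonneg_of_nonpos (Nat.cast_nonneg n) (hf x)
    have hle := ofReal_le_action ρ m q hqK
    simp only [q, ContinuousMap.coe_mk, PiLp.zero_apply, signedIntegral_zero,
      Finset.sum_const_zero, add_zero, signedIntegral_const_mul] at hle
    exact (ENNReal.ofReal_le_iff_le_toReal hfin).mp hle
  by_contra! hpos
  obtain ⟨n, hn⟩ := exists_nat_gt ((action ρ m).toReal / signedIntegral ρ f)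
  rw [div_lt_iff₀ hpos] at hn
  linarith [scaled_le n]

end Action

namespace MeasureTheory

theorem Measure.measure_isClosed_le_of_forall_lintegral_le {Ω : Type*} [MeasurableSpace Ω]
    [TopologicalSpace Ω] [HasOuterApproxClosed Ω] [OpensMeasurableSpace Ω] {μ ν : Measure Ω}
    [IsFiniteMeasure μ] [IsFiniteMeasure ν]
    (h : ∀ f : Ω →ᵇ ℝ≥0, ∫⁻ x, f x ∂ν ≤ ∫⁻ x, f x ∂μ) {F : Set Ω} (hF : IsClosed F) :
    ν F ≤ μ F :=
  le_of_tendsto_of_tendsto' (HasOuterApproxClosed.tendsto_lintegral_apprSeq hF ν)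
    (HasOuterApproxClosed.tendsto_lintegral_apprSeq hF μ) fun n => h (hF.apprSeq n)

theorem Measure.eq_zero_of_mutuallySingular_of_forall_isClosed_le {Ω : Type*}
    [MeasurableSpace Ω] [TopologicalSpace Ω] {μ ν : Measure Ω} [IsFiniteMeasure ν]
    [ν.WeaklyRegular] (hμν : μ ⟂ₘ ν) (h : ∀ F, IsClosed F → ν F ≤ μ F) : ν = 0 := by
  obtain ⟨S, hS, hμS, hνSc⟩ := hμν
  have hνS : ν S = 0 := by
    by_contra hne
    obtain ⟨F, hFS, hF, hνF⟩ :=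
      hS.exists_lt_isClosed_of_ne_top (measure_ne_top ν S) (pos_iff_ne_zero.mpr hne)
    have : μ F = 0 := measure_mono_null hFS hμS
    exact (h F hF).not_gt (this ▸ hνF)
  rw [← Measure.measure_univ_eq_zero, ← measure_add_measure_compl hS, hνS, hνSc, add_zero]

namespace SignedMeasure

variable {X : Type*} [MeasurableSpace X]

theorem nonneg_of_negPart_eq_zero (ρ : SignedMeasure X)
    (h : ρ.toJordanDecomposition.negPart = 0) {E : Set X} (hE : MeasurableSet E) : 0 ≤ ρ E := by
  rw [ρ.apply_eq_posPart_real_sub_negPart_real hE, h]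
  simp

variable [TopologicalSpace X]

theorem lintegral_negPart_le_lintegral_posPart [OpensMeasurableSpace X] (ρ : SignedMeasure X)
    (h : ∀ f : C(X, ℝ), (∀ x, f x ≤ 0) → signedIntegral ρ f ≤ 0) (f : X →ᵇ ℝ≥0) :
    ∫⁻ x, f x ∂ρ.toJordanDecomposition.negPart ≤ ∫⁻ x, f x ∂ρ.toJordanDecomposition.posPart := by
  have hneg := h ⟨fun x => -(f x : ℝ), by fun_prop⟩ fun x => neg_nonpos.mpr (f x).2
  simp only [signedIntegral, ContinuousMap.coe_mk, integral_neg] at hneg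
  rw [← ENNReal.toReal_le_toReal (f.lintegral_lt_top_of_nnreal _).ne
    (f.lintegral_lt_top_of_nnreal _).ne, f.toReal_lintegral_coe_eq_integral,
    f.toReal_lintegral_coe_eq_integral]
  linarith

theorem negPart_eq_zero_of_forall_signedIntegral_nonpos [TopologicalSpace.PseudoMetrizableSpace X]
    [BorelSpace X] (ρ : SignedMeasure X)
    (h : ∀ f : C(X, ℝ), (∀ x, f x ≤ 0) → signedIntegral ρ f ≤ 0) :
    ρ.toJordanDecomposition.negPart = 0 :=
  Measure.eq_zero_of_mutuallySingular_of_forall_isClosed_le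
    ρ.toJordanDecomposition.mutuallySingular fun _ hF =>
      Measure.measure_isClosed_le_of_forall_lintegral_le
        (ρ.lintegral_negPart_le_lintegral_posPart h) hF

end SignedMeasure

end MeasureTheory

theorem nonneg_of_action_finite_general {d : ℕ} (D : Set (EuclideanSpace ℝ (Fin d)))
    (ρ : SignedMeasure ↥D) (m : Fin d → SignedMeasure ↥D)
    (hfin : action ρ m ≠ ⊤) :
    ∀ E : Set ↥D, MeasurableSet E → 0 ≤ ρ E := fun _ hE =>
  ρ.nonneg_of_negPart_eq_zero
    (ρ.negPart_eq_zero_of_forall_signedIntegral_nonpos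
      (signedIntegral_nonpos_of_action_ne_top hfin)) hE

/-- If the action `A(ρ,m)` is finite, then `ρ` is a nonnegative measure,
i.e. `ρ(E) ≥ 0` for every Borel set `E`. -/
theorem nonneg_of_action_finite {d : ℕ} (D : Set (EuclideanSpace ℝ (Fin d)))
    (hD : IsCompact D) (ρ : SignedMeasure ↥D) (m : Fin d → SignedMeasure ↥D)
    (hfin : action ρ m ≠ ⊤) :
    ∀ E : Set ↥D, MeasurableSet E → 0 ≤ ρ E :=
  nonneg_of_action_finite_general D ρ m hfin

end
end

section
/- (Theorem 3.2; Pock, Cremers, Bischof, Chambolle) Let H be a real Hilbert space and let C, 𝒦 ⊆ H be nonempty closed convex subsets. Assume there exists a saddle point of the pairing ⟨q, σ⟩ on C × 𝒦, i.e. a pair (σ̄, q̄) ∈ C × 𝒦 with ⟨q, σ̄⟩ ≤ ⟨q̄, σ̄⟩ ≤ ⟨q̄, σ⟩ for all q ∈ 𝒦 and σ ∈ C. Let τ₁, τ₂ > 0 with τ₁τ₂ < 1, let (σ⁰, q⁰) ∈ C × 𝒦, and define iterates by σ^{k+1} = P_C(σ^k − τ₁ q^k) and q^{k+1} = P_𝒦(q^k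 + τ₂(2σ^{k+1} − σ^k)), where P_C and P_𝒦 denote the metric (nearest-point) projections onto C and 𝒦. Then the sequence (σ^k, q^k) converges weakly in H × H to some (σ*, q*) ∈ C × 𝒦 that is a saddle point of the pairing on C × 𝒦. -/
/-!
The iteration is Fejér monotone with respect to every saddle point in the quadratic form
`B z z = τ₂ ‖z.1‖² + τ₁ ‖z.2‖² - 2 τ₁ τ₂ ⟪z.1, z.2⟫`, which dominates a multiple of the norm of
`H × H` because `τ₁ τ₂ < 1`. Hence the iterates are bounded and successive differences tend to
zero, and passing to the limit in the two variational inequalities that define the projection steps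
shows that every weak cluster point is a saddle point. Since `B (z k - p) (z k - p)` converges for
every saddle point `p`, Opial's argument shows that there is only one cluster point. Cluster points
are taken along ultrafilters, along which bounded sequences have weak limits by Banach–Alaoglu.
-/

open Filter Topology Asymptotics
open scoped RealInnerProductSpace

theorem isSaddlePointOn_iff_forall_le_and_le {E F β : Type*} [Preorder β] {X : Set E} {Y : Set F}
    {f : E → F → β} {a : E} {b : F} (ha : a ∈ X) (hb : b ∈ Y) :
    IsSaddlePointOn X Y f a b ↔ ∀ y ∈ Y, ∀ x ∈ X, f a y ≤ f a b ∧ f a b ≤ f x b :=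
  ⟨fun h y hy x hx => ⟨h a ha y hy, h x hx b hb⟩,
    fun h x hx y hy => (h y hy a ha).1.trans (h b hb x hx).2⟩

section Norm

variable {α E : Type*} [SeminormedAddCommGroup E] {l : Filter α}

theorem tendsto_zero_of_mul_sq_norm_le {u : α → E} {f : α → ℝ}
    {c : ℝ} (hc : 0 < c) (hu : ∀ k, c * ‖u k‖ ^ 2 ≤ f k) (hf : Tendsto f l (𝓝 0)) :
    Tendsto u l (𝓝 0) := by
  refine tendsto_zero_iff_norm_tendsto_zero.2 (squeeze_zero (fun _ => norm_nonneg _)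
    (fun k => ?_) (by simpa using (hf.div_const c).sqrt))
  simpa using Real.abs_le_sqrt ((le_div_iff₀' hc).2 (hu k))

theorem isBigO_one_of_mul_sq_norm_sub_le {u : α → E} {a : E}
    {c M : ℝ} (hc : 0 < c) (hu : ∀ k, c * ‖u k - a‖ ^ 2 ≤ M) : u =O[l] fun _ => (1 : ℝ) := by
  refine (isBigO_one_iff ℝ).2 ⟨‖a‖ + √(M / c), eventually_map.2 (Eventually.of_forall fun k => ?_)⟩
  have := Real.abs_le_sqrt ((le_div_iff₀' hc).2 (hu k))
  rw [abs_norm] at this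
  calc ‖u k‖ ≤ ‖a‖ + ‖u k - a‖ := by simpa using norm_add_le a (u k - a)
    _ ≤ ‖a‖ + √(M / c) := by linarith

end Norm

section WeakConvergence

variable {α H : Type*} [NormedAddCommGroup H] [InnerProductSpace ℝ H]

theorem inner_sub_sub_nonpos_of_forall_dist_le {S : Set H} (hS : Convex ℝ S) {x p : H}
    (hp : p ∈ S) (hmin : ∀ y ∈ S, dist x p ≤ dist x y) {z : H} (hz : z ∈ S) :
    ⟪x - p, z - p⟫ ≤ 0 := by
  have : Nonempty S := ⟨⟨p, hp⟩⟩
  refine (norm_eq_iInf_iff_real_inner_le_zero hS hp).1 ?_ z hz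
  refine le_antisymm (le_ciInf fun y => ?_) (ciInf_le ⟨0, ?_⟩ (⟨p, hp⟩ : S))
  · simpa [dist_eq_norm] using hmin y y.2
  · rintro _ ⟨y, rfl⟩
    exact norm_nonneg _

def TendstoWeakly (x : α → H) (l : Filter α) (a : H) : Prop :=
  ∀ y, Tendsto (fun k => ⟪x k, y⟫) l (𝓝 ⟪a, y⟫)

variable {x y : α → H} {l : Filter α} {a : H}

theorem TendstoWeakly.of_tendsto_sub (h : TendstoWeakly x l a)
    (hxy : Tendsto (fun k => x k - y k) l (𝓝 0)) : TendstoWeakly y l a := fun v => by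
  simpa [inner_sub_left] using (h v).sub (hxy.inner (tendsto_const_nhds (x := v)))

theorem tendstoWeakly_iff_ultrafilter :
    TendstoWeakly x l a ↔ ∀ U : Ultrafilter α, ↑U ≤ l → TendstoWeakly x U a := by
  simp only [TendstoWeakly, tendsto_iff_ultrafilter _ l]
  exact ⟨fun h U hU v => h v U hU, fun h v U hU => h U hU v⟩

theorem TendstoWeakly.mem_of_isClosed_of_convex [CompleteSpace H] [l.NeBot] {S : Set H}
    (hSc : IsClosed S) (hS : Convex ℝ S) (hx : ∀ᶠ k in l, x k ∈ S) (h : TendstoWeakly x l a) :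
    a ∈ S := by
  obtain ⟨p, hp, hmin⟩ := exists_norm_eq_iInf_of_complete_convex
    (hx.exists.elim fun k hk => ⟨x k, hk⟩) hSc.isComplete hS a
  have hvi := (norm_eq_iInf_iff_real_inner_le_zero hS hp).1 hmin
  have hlim : ⟪a - p, a - p⟫ ≤ 0 := by
    rw [inner_sub_left]
    refine le_of_tendsto ((h (a - p)).sub_const ⟪p, a - p⟫) (hx.mono fun k hk => ?_)
    rw [← inner_sub_left, real_inner_comm]
    exact hvi (x k) hk
  rwa [sub_eq_zero.1 (real_inner_self_nonpos.1 hlim)]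

theorem exists_tendstoWeakly_of_isBigO [CompleteSpace H] (U : Ultrafilter α)
    (hx : x =O[U] fun _ => (1 : ℝ)) : ∃ a, TendstoWeakly x U a := by
  obtain ⟨R, hR⟩ := (isBigO_one_iff ℝ).1 hx
  let φ : α → WeakDual ℝ H := fun k => StrongDual.toWeakDual (InnerProductSpace.toDual ℝ H (x k))
  obtain ⟨φ₀, -, hφ₀⟩ := (WeakDual.isCompact_closedBall (0 : StrongDual ℝ H) R).ultrafilter_le_nhds
    (U.map φ) (by
      rw [le_principal_iff]
      exact Filter.mem_map.2 ((eventually_map.1 hR).mono fun k hk => by simpa [φ] using hk))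
  refine ⟨(InnerProductSpace.toDual ℝ H).symm (WeakDual.toStrongDual φ₀), fun v => ?_⟩
  convert tendsto_iff_forall_eval_tendsto_topDualPairing.1 hφ₀ v using 2
  · rfl
  · simp only [InnerProductSpace.toDual_symm_apply, WeakDual.toStrongDual_apply]
    rfl

theorem tendsto_inner_zero_of_isBigO (hx : Tendsto x l (𝓝 0)) (hy : y =O[l] fun _ => (1 : ℝ)) :
    Tendsto (fun k => ⟪x k, y k⟫) l (𝓝 0) :=
  squeeze_zero_norm (fun k => abs_real_inner_le_norm (x k) (y k))
    ((tendsto_zero_iff_norm_tendsto_zero.1 hx).zero_mul_isBoundedUnder_le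
      ((isBigO_one_iff ℝ).1 hy.norm_left))

end WeakConvergence

section BilinForm

variable {α E : Type*} [AddCommGroup E] [Module ℝ E] {B : LinearMap.BilinForm ℝ E}

theorem LinearMap.BilinForm.IsSymm.apply_sub_add_apply_sub (hB : B.IsSymm) (x y p : E) :
    B (y - p) (y - p) + B (x - y) (x - y) = B (x - p) (x - p) + 2 * B (x - y) (p - y) := by
  simp only [map_sub, LinearMap.sub_apply]
  rw [hB.eq y x, hB.eq p x, hB.eq p y]
  ring

/-- Opial's argument: `B (x k) (a - b)` is a constant minus half the difference of the two
convergent sequences, so its limits along `U` and `V` agree. -/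
theorem LinearMap.BilinForm.IsSymm.eq_of_tendsto (hB : B.IsSymm)
    (hB₀ : ∀ z, B z z = 0 → z = 0) {x : α → E} {l U V : Filter α} [U.NeBot] [V.NeBot]
    (hU : U ≤ l) (hV : V ≤ l) {a b : E} {La Lb : ℝ}
    (ha : Tendsto (fun k => B (x k - a) (x k - a)) l (𝓝 La))
    (hb : Tendsto (fun k => B (x k - b) (x k - b)) l (𝓝 Lb))
    (hxa : Tendsto (fun k => B (x k) (a - b)) U (𝓝 (B a (a - b))))
    (hxb : Tendsto (fun k => B (x k) (a - b)) V (𝓝 (B b (a - b)))) : a = b := by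
  have hexpand : ∀ k, B (x k) (a - b)
      = (B a a - B b b - (B (x k - a) (x k - a) - B (x k - b) (x k - b))) / 2 := by
    intro k
    simp only [map_sub, LinearMap.sub_apply]
    rw [hB.eq a (x k), hB.eq b (x k)]
    ring
  have hlim : Tendsto (fun k => B (x k) (a - b)) l (𝓝 ((B a a - B b b - (La - Lb)) / 2)) := by
    simp_rw [hexpand]
    exact ((ha.sub hb).const_sub _).div_const 2
  have h₁ := tendsto_nhds_unique hxa (hlim.mono_left hU)
  have h₂ := tendsto_nhds_unique hxb (hlim.mono_left hV)
  refine sub_eq_zero.1 (hB₀ _ ?_)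
  rw [LinearMap.map_sub₂, h₁, h₂, sub_self]

end BilinForm

section PrimalDualForm

variable {H : Type*} [NormedAddCommGroup H] [InnerProductSpace ℝ H] {τ₁ τ₂ : ℝ}

/-- `τ₁ τ₂` times the metric `‖σ‖² / τ₁ + ‖q‖² / τ₂ - 2 ⟪σ, q⟫` of the paper's convergence proof. -/
def primalDualForm (τ₁ τ₂ : ℝ) : LinearMap.BilinForm ℝ (H × H) :=
  LinearMap.mk₂ ℝ
    (fun z w => τ₂ * ⟪z.1, w.1⟫ + τ₁ * ⟪z.2, w.2⟫ - τ₁ * τ₂ * (⟪z.1, w.2⟫ + ⟪z.2, w.1⟫))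
    (fun _ _ _ => by simp only [Prod.fst_add, Prod.snd_add, inner_add_left]; ring)
    (fun _ _ _ => by
      simp only [Prod.smul_fst, Prod.smul_snd, real_inner_smul_left, smul_eq_mul]; ring)
    (fun _ _ _ => by simp only [Prod.fst_add, Prod.snd_add, inner_add_right]; ring)
    (fun _ _ _ => by
      simp only [Prod.smul_fst, Prod.smul_snd, real_inner_smul_right, smul_eq_mul]; ring)

@[simp]
theorem primalDualForm_apply (z w : H × H) : primalDualForm τ₁ τ₂ z w
    = τ₂ * ⟪z.1, w.1⟫ + τ₁ * ⟪z.2, w.2⟫ - τ₁ * τ₂ * (⟪z.1, w.2⟫ + ⟪z.2, w.1⟫) :=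
  rfl

theorem isSymm_primalDualForm : (primalDualForm τ₁ τ₂ : LinearMap.BilinForm ℝ (H × H)).IsSymm :=
  ⟨fun z w => by
    simp only [primalDualForm_apply, real_inner_comm z.1, real_inner_comm z.2]
    ring⟩

theorem primalDualForm_self_eq_fst (z : H × H) : primalDualForm τ₁ τ₂ z z
    = τ₁ * ‖z.2 - τ₂ • z.1‖ ^ 2 + τ₂ * (1 - τ₁ * τ₂) * ‖z.1‖ ^ 2 := by
  rw [primalDualForm_apply, norm_sub_sq_real, norm_smul, real_inner_smul_right,
    Real.norm_eq_abs, mul_pow, sq_abs, real_inner_self_eq_norm_sq, real_inner_self_eq_norm_sq,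
    real_inner_comm z.2 z.1]
  ring

theorem primalDualForm_self_eq_snd (z : H × H) : primalDualForm τ₁ τ₂ z z
    = τ₂ * ‖z.1 - τ₁ • z.2‖ ^ 2 + τ₁ * (1 - τ₁ * τ₂) * ‖z.2‖ ^ 2 := by
  rw [primalDualForm_apply, norm_sub_sq_real, norm_smul, real_inner_smul_right,
    Real.norm_eq_abs, mul_pow, sq_abs, real_inner_self_eq_norm_sq, real_inner_self_eq_norm_sq,
    real_inner_comm z.2 z.1]
  ring

theorem mul_sq_norm_fst_le_primalDualForm (hτ₁ : 0 ≤ τ₁) (z : H × H) :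
    τ₂ * (1 - τ₁ * τ₂) * ‖z.1‖ ^ 2 ≤ primalDualForm τ₁ τ₂ z z := by
  rw [primalDualForm_self_eq_fst]
  have := mul_nonneg hτ₁ (sq_nonneg ‖z.2 - τ₂ • z.1‖)
  linarith

theorem mul_sq_norm_snd_le_primalDualForm (hτ₂ : 0 ≤ τ₂) (z : H × H) :
    τ₁ * (1 - τ₁ * τ₂) * ‖z.2‖ ^ 2 ≤ primalDualForm τ₁ τ₂ z z := by
  rw [primalDualForm_self_eq_snd]
  have := mul_nonneg hτ₂ (sq_nonneg ‖z.1 - τ₁ • z.2‖)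
  linarith

theorem primalDualForm_self_nonneg (hτ₁ : 0 ≤ τ₁) (hτ₂ : 0 ≤ τ₂) (hττ : τ₁ * τ₂ ≤ 1)
    (z : H × H) : 0 ≤ primalDualForm τ₁ τ₂ z z :=
  le_trans (by have := sub_nonneg.2 hττ; positivity) (mul_sq_norm_fst_le_primalDualForm hτ₁ z)

theorem eq_zero_of_primalDualForm_self_eq_zero (hτ₁ : 0 < τ₁) (hτ₂ : 0 < τ₂)
    (hττ : τ₁ * τ₂ < 1) {z : H × H} (hz : primalDualForm τ₁ τ₂ z z = 0) : z = 0 := by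
  have hc₁ : 0 < τ₂ * (1 - τ₁ * τ₂) := mul_pos hτ₂ (by linarith)
  have hc₂ : 0 < τ₁ * (1 - τ₁ * τ₂) := mul_pos hτ₁ (by linarith)
  have h₁ := mul_sq_norm_fst_le_primalDualForm (τ₂ := τ₂) hτ₁.le z
  have h₂ := mul_sq_norm_snd_le_primalDualForm (τ₁ := τ₁) hτ₂.le z
  rw [hz] at h₁ h₂
  ext
  · exact norm_eq_zero.1 (pow_eq_zero_iff two_ne_zero |>.1
      (le_antisymm (nonpos_of_mul_nonpos_right h₁ hc₁) (sq_nonneg _)))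
  · exact norm_eq_zero.1 (pow_eq_zero_iff two_ne_zero |>.1
      (le_antisymm (nonpos_of_mul_nonpos_right h₂ hc₂) (sq_nonneg _)))

theorem TendstoWeakly.tendsto_primalDualForm {α : Type*} {σ q : α → H} {l : Filter α} {s t : H}
    (hσ : TendstoWeakly σ l s) (hq : TendstoWeakly q l t) (w : H × H) :
    Tendsto (fun k => primalDualForm τ₁ τ₂ (σ k, q k) w) l
      (𝓝 (primalDualForm τ₁ τ₂ (s, t) w)) := by
  simp only [primalDualForm_apply]
  exact (((hσ w.1).const_mul τ₂).add ((hq w.2).const_mul τ₁)).sub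
    (((hσ w.2).add (hq w.1)).const_mul _)

theorem primalDualForm_sub_sub (σ₀ q₀ σ₁ q₁ s t : H) :
    primalDualForm τ₁ τ₂ ((σ₀, q₀) - (σ₁, q₁)) ((s, t) - (σ₁, q₁))
      = τ₂ * ⟪σ₀ - τ₁ • q₀ - σ₁, s - σ₁⟫ + τ₁ * ⟪q₀ + τ₂ • ((2 : ℝ) • σ₁ - σ₀) - q₁, t - q₁⟫
        - τ₁ * τ₂ * (⟪t, σ₁⟫ - ⟪q₁, s⟫) := by
  simp only [primalDualForm_apply, Prod.fst_sub, Prod.snd_sub, inner_sub_left, inner_sub_right,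
    inner_add_left, real_inner_smul_left, real_inner_comm σ₁ t, real_inner_comm σ₁ q₁]
  ring

theorem inner_sub_inner_eq (hτ₁ : τ₁ ≠ 0) (hτ₂ : τ₂ ≠ 0) (σ₀ q₀ σ₁ q₁ z w : H) :
    ⟪σ₁, w⟫ - ⟪q₀, z⟫
      = τ₁⁻¹ * ⟪σ₀ - τ₁ • q₀ - σ₁, z - σ₁⟫ + τ₂⁻¹ * ⟪q₀ + τ₂ • ((2 : ℝ) • σ₁ - σ₀) - q₁, w - q₁⟫
        + ⟪σ₀ - σ₁, w - q₁ - τ₁⁻¹ • (z - σ₁)⟫ - ⟪q₀ - q₁, σ₁ + τ₂⁻¹ • (w - q₁)⟫ := by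
  simp only [inner_sub_left, inner_sub_right, inner_add_left, inner_add_right,
    real_inner_smul_left, real_inner_smul_right, real_inner_comm σ₁ q₀, real_inner_comm σ₁ q₁]
  field_simp
  ring

end PrimalDualForm

section PrimalDual

variable {H : Type*} [NormedAddCommGroup H] [InnerProductSpace ℝ H]

/-- The iteration with admissible step sizes, each projection step being recorded by the
variational inequality that characterizes the nearest point in a convex set. -/
structure IsPrimalDualSeq (C K : Set H) (τ₁ τ₂ : ℝ) (σ q : ℕ → H) : Prop where
  pos_left : 0 < τ₁
  pos_right : 0 < τ₂
  mul_lt_one : τ₁ * τ₂ < 1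
  primal_mem : ∀ k, σ (k + 1) ∈ C
  dual_mem : ∀ k, q (k + 1) ∈ K
  primal_le : ∀ k, ∀ z ∈ C, ⟪σ k - τ₁ • q k - σ (k + 1), z - σ (k + 1)⟫ ≤ 0
  dual_le : ∀ k, ∀ w ∈ K, ⟪q k + τ₂ • ((2 : ℝ) • σ (k + 1) - σ k) - q (k + 1), w - q (k + 1)⟫ ≤ 0

namespace IsPrimalDualSeq

variable {C K : Set H} {τ₁ τ₂ : ℝ} {σ q : ℕ → H} {s t : H}

theorem primalDualForm_succ_add_le (h : IsPrimalDualSeq C K τ₁ τ₂ σ q) (hs : s ∈ C) (ht : t ∈ K)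
    (hst : IsSaddlePointOn C K (fun σ q => ⟪q, σ⟫) s t) (k : ℕ) :
    primalDualForm τ₁ τ₂ ((σ (k + 1), q (k + 1)) - (s, t)) ((σ (k + 1), q (k + 1)) - (s, t))
      + primalDualForm τ₁ τ₂ ((σ k, q k) - (σ (k + 1), q (k + 1)))
          ((σ k, q k) - (σ (k + 1), q (k + 1)))
      ≤ primalDualForm τ₁ τ₂ ((σ k, q k) - (s, t)) ((σ k, q k) - (s, t)) := by
  rw [isSymm_primalDualForm.apply_sub_add_apply_sub,
    primalDualForm_sub_sub (σ k) (q k) (σ (k + 1)) (q (k + 1)) s t]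
  have h₁ := mul_nonpos_of_nonneg_of_nonpos h.pos_right.le (h.primal_le k s hs)
  have h₂ := mul_nonpos_of_nonneg_of_nonpos h.pos_left.le (h.dual_le k t ht)
  have h₃ := mul_nonneg (mul_pos h.pos_left h.pos_right).le
    (sub_nonneg.2 (hst _ (h.primal_mem k) _ (h.dual_mem k)))
  linarith

theorem antitone_primalDualForm (h : IsPrimalDualSeq C K τ₁ τ₂ σ q) (hs : s ∈ C) (ht : t ∈ K)
    (hst : IsSaddlePointOn C K (fun σ q => ⟪q, σ⟫) s t) :
    Antitone fun k => primalDualForm τ₁ τ₂ ((σ k, q k) - (s, t)) ((σ k, q k) - (s, t)) :=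
  antitone_nat_of_succ_le fun k => le_trans (le_add_of_nonneg_right
    (primalDualForm_self_nonneg h.pos_left.le h.pos_right.le h.mul_lt_one.le _))
    (h.primalDualForm_succ_add_le hs ht hst k)

theorem exists_tendsto_primalDualForm (h : IsPrimalDualSeq C K τ₁ τ₂ σ q) (hs : s ∈ C)
    (ht : t ∈ K) (hst : IsSaddlePointOn C K (fun σ q => ⟪q, σ⟫) s t) :
    ∃ L, Tendsto (fun k => primalDualForm τ₁ τ₂ ((σ k, q k) - (s, t)) ((σ k, q k) - (s, t)))
      atTop (𝓝 L) :=
  ⟨_, tendsto_atTop_ciInf (h.antitone_primalDualForm hs ht hst) ⟨0, by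
    rintro _ ⟨k, rfl⟩
    exact primalDualForm_self_nonneg h.pos_left.le h.pos_right.le h.mul_lt_one.le _⟩⟩

theorem tendsto_sub_succ (h : IsPrimalDualSeq C K τ₁ τ₂ σ q) (hs : s ∈ C) (ht : t ∈ K)
    (hst : IsSaddlePointOn C K (fun σ q => ⟪q, σ⟫) s t) :
    Tendsto (fun k => σ k - σ (k + 1)) atTop (𝓝 0) ∧
      Tendsto (fun k => q k - q (k + 1)) atTop (𝓝 0) := by
  obtain ⟨L, hL⟩ := h.exists_tendsto_primalDualForm hs ht hst
  have hstep : Tendsto (fun k => primalDualForm τ₁ τ₂ ((σ k, q k) - (σ (k + 1), q (k + 1)))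
      ((σ k, q k) - (σ (k + 1), q (k + 1)))) atTop (𝓝 0) := by
    refine squeeze_zero
      (fun k => primalDualForm_self_nonneg h.pos_left.le h.pos_right.le h.mul_lt_one.le _)
      (fun k => le_sub_iff_add_le'.2 (h.primalDualForm_succ_add_le hs ht hst k)) ?_
    simpa using hL.sub (hL.comp (tendsto_add_atTop_nat 1))
  have hc := sub_pos.2 h.mul_lt_one
  exact ⟨tendsto_zero_of_mul_sq_norm_le (mul_pos h.pos_right hc)
      (fun k => mul_sq_norm_fst_le_primalDualForm h.pos_left.le
        ((σ k, q k) - (σ (k + 1), q (k + 1)))) hstep,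
    tendsto_zero_of_mul_sq_norm_le (mul_pos h.pos_left hc)
      (fun k => mul_sq_norm_snd_le_primalDualForm h.pos_right.le
        ((σ k, q k) - (σ (k + 1), q (k + 1)))) hstep⟩

theorem isBigO_one (h : IsPrimalDualSeq C K τ₁ τ₂ σ q) (hs : s ∈ C) (ht : t ∈ K)
    (hst : IsSaddlePointOn C K (fun σ q => ⟪q, σ⟫) s t) :
    σ =O[atTop] (fun _ => (1 : ℝ)) ∧ q =O[atTop] (fun _ => (1 : ℝ)) := by
  have hle k := h.antitone_primalDualForm hs ht hst (Nat.zero_le k)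
  have hc := sub_pos.2 h.mul_lt_one
  exact ⟨isBigO_one_of_mul_sq_norm_sub_le (mul_pos h.pos_right hc)
      (fun k => (mul_sq_norm_fst_le_primalDualForm h.pos_left.le _).trans (hle k)),
    isBigO_one_of_mul_sq_norm_sub_le (mul_pos h.pos_left hc)
      (fun k => (mul_sq_norm_snd_le_primalDualForm (τ₁ := τ₁) h.pos_right.le _).trans (hle k))⟩

theorem inner_succ_sub_inner_le (h : IsPrimalDualSeq C K τ₁ τ₂ σ q) {z w : H} (hz : z ∈ C)
    (hw : w ∈ K) (k : ℕ) :
    ⟪σ (k + 1), w⟫ - ⟪q k, z⟫ ≤ ⟪σ k - σ (k + 1), w - q (k + 1) - τ₁⁻¹ • (z - σ (k + 1))⟫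
      - ⟪q k - q (k + 1), σ (k + 1) + τ₂⁻¹ • (w - q (k + 1))⟫ := by
  rw [inner_sub_inner_eq h.pos_left.ne' h.pos_right.ne' (σ k) (q k) (σ (k + 1)) (q (k + 1))]
  have h₁ := mul_nonpos_of_nonneg_of_nonpos (inv_nonneg.2 h.pos_left.le) (h.primal_le k z hz)
  have h₂ := mul_nonpos_of_nonneg_of_nonpos (inv_nonneg.2 h.pos_right.le) (h.dual_le k w hw)
  linarith

theorem isSaddlePointOn_of_tendstoWeakly [CompleteSpace H] (h : IsPrimalDualSeq C K τ₁ τ₂ σ q)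
    (hCc : IsClosed C) (hC : Convex ℝ C) (hKc : IsClosed K) (hK : Convex ℝ K) (hs : s ∈ C)
    (ht : t ∈ K) (hst : IsSaddlePointOn C K (fun σ q => ⟪q, σ⟫) s t) {U : Filter ℕ} [U.NeBot]
    (hU : U ≤ atTop) {a b : H} (ha : TendstoWeakly σ U a) (hb : TendstoWeakly q U b) :
    a ∈ C ∧ b ∈ K ∧ IsSaddlePointOn C K (fun σ q => ⟪q, σ⟫) a b := by
  obtain ⟨hdσ, hdq⟩ := h.tendsto_sub_succ hs ht hst
  obtain ⟨hbσ, hbq⟩ := h.isBigO_one hs ht hst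
  have ha' : TendstoWeakly (fun k => σ (k + 1)) U a := ha.of_tendsto_sub (hdσ.mono_left hU)
  have hb' : TendstoWeakly (fun k => q (k + 1)) U b := hb.of_tendsto_sub (hdq.mono_left hU)
  have hbσ' := (hbσ.comp_tendsto (tendsto_add_atTop_nat 1)).mono hU
  have hbq' := (hbq.comp_tendsto (tendsto_add_atTop_nat 1)).mono hU
  refine ⟨ha'.mem_of_isClosed_of_convex hCc hC (.of_forall h.primal_mem),
    hb'.mem_of_isClosed_of_convex hKc hK (.of_forall h.dual_mem), fun z hz w hw => ?_⟩
  have herr := (tendsto_inner_zero_of_isBigO (hdσ.mono_left hU)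
      (((isBigO_const_one ℝ w U).sub hbq').sub
        (((isBigO_const_one ℝ z U).sub hbσ').const_smul_left τ₁⁻¹))).sub
    (tendsto_inner_zero_of_isBigO (hdq.mono_left hU)
      (hbσ'.add (((isBigO_const_one ℝ w U).sub hbq').const_smul_left τ₂⁻¹)))
  rw [sub_zero] at herr
  have := le_of_tendsto_of_tendsto' ((ha' w).sub (hb z)) herr (h.inner_succ_sub_inner_le hz hw)
  show ⟪w, a⟫ ≤ ⟪b, z⟫
  rw [real_inner_comm]
  linarith

theorem eq_of_tendstoWeakly (h : IsPrimalDualSeq C K τ₁ τ₂ σ q) {s' t' : H} (hs : s ∈ C)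
    (ht : t ∈ K) (hst : IsSaddlePointOn C K (fun σ q => ⟪q, σ⟫) s t) (hs' : s' ∈ C)
    (ht' : t' ∈ K) (hst' : IsSaddlePointOn C K (fun σ q => ⟪q, σ⟫) s' t') {U V : Filter ℕ}
    [U.NeBot] [V.NeBot] (hU : U ≤ atTop) (hV : V ≤ atTop) (hσU : TendstoWeakly σ U s)
    (hqU : TendstoWeakly q U t) (hσV : TendstoWeakly σ V s') (hqV : TendstoWeakly q V t') :
    s = s' ∧ t = t' := by
  obtain ⟨L, hL⟩ := h.exists_tendsto_primalDualForm hs ht hst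
  obtain ⟨L', hL'⟩ := h.exists_tendsto_primalDualForm hs' ht' hst'
  exact Prod.ext_iff.1 <| isSymm_primalDualForm.eq_of_tendsto
    (fun _ => eq_zero_of_primalDualForm_self_eq_zero h.pos_left h.pos_right h.mul_lt_one)
    hU hV hL hL' (hσU.tendsto_primalDualForm hqU _) (hσV.tendsto_primalDualForm hqV _)

theorem exists_tendstoWeakly [CompleteSpace H] (h : IsPrimalDualSeq C K τ₁ τ₂ σ q)
    (hCc : IsClosed C) (hC : Convex ℝ C) (hKc : IsClosed K) (hK : Convex ℝ K) (hs : s ∈ C)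
    (ht : t ∈ K) (hst : IsSaddlePointOn C K (fun σ q => ⟪q, σ⟫) s t) :
    ∃ a b, a ∈ C ∧ b ∈ K ∧ IsSaddlePointOn C K (fun σ q => ⟪q, σ⟫) a b ∧
      TendstoWeakly σ atTop a ∧ TendstoWeakly q atTop b := by
  have hlim (U : Ultrafilter ℕ) (hU : (U : Filter ℕ) ≤ atTop) : ∃ a b, (a ∈ C ∧ b ∈ K ∧
      IsSaddlePointOn C K (fun σ q => ⟪q, σ⟫) a b) ∧ TendstoWeakly σ U a ∧ TendstoWeakly q U b := by
    obtain ⟨hbσ, hbq⟩ := h.isBigO_one hs ht hst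
    obtain ⟨a, ha⟩ := exists_tendstoWeakly_of_isBigO U (hbσ.mono hU)
    obtain ⟨b, hb⟩ := exists_tendstoWeakly_of_isBigO U (hbq.mono hU)
    exact ⟨a, b, h.isSaddlePointOn_of_tendstoWeakly hCc hC hKc hK hs ht hst hU ha hb, ha, hb⟩
  obtain ⟨a, b, ⟨haC, hbK, hab⟩, ha, hb⟩ := hlim (Ultrafilter.of atTop) (Ultrafilter.of_le _)
  have hall (U : Ultrafilter ℕ) (hU : (U : Filter ℕ) ≤ atTop) :
      TendstoWeakly σ U a ∧ TendstoWeakly q U b := by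
    obtain ⟨a', b', ⟨ha'C, hb'K, ha'b'⟩, ha', hb'⟩ := hlim U hU
    obtain ⟨rfl, rfl⟩ := h.eq_of_tendstoWeakly haC hbK hab ha'C hb'K ha'b'
      (Ultrafilter.of_le _) hU ha hb ha' hb'
    exact ⟨ha', hb'⟩
  exact ⟨a, b, haC, hbK, hab, tendstoWeakly_iff_ultrafilter.2 fun U hU => (hall U hU).1,
    tendstoWeakly_iff_ultrafilter.2 fun U hU => (hall U hU).2⟩

end IsPrimalDualSeq

end PrimalDual

theorem primal_dual_weak_convergence_general
    {H : Type*} [NormedAddCommGroup H] [InnerProductSpace ℝ H] [CompleteSpace H]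
    (C K : Set H)
    (hCc : IsClosed C) (hCconv : Convex ℝ C)
    (hKc : IsClosed K) (hKconv : Convex ℝ K)
    (PC PK : H → H)
    (hPC : ∀ x : H, PC x ∈ C ∧ ∀ y ∈ C, dist x (PC x) ≤ dist x y)
    (hPK : ∀ x : H, PK x ∈ K ∧ ∀ y ∈ K, dist x (PK x) ≤ dist x y)
    (σb qb : H) (hσb : σb ∈ C) (hqb : qb ∈ K)
    (hsaddle : ∀ q' ∈ K, ∀ σ' ∈ C,
      (inner ℝ q' σb : ℝ) ≤ (inner ℝ qb σb : ℝ) ∧ (inner ℝ qb σb : ℝ) ≤ (inner ℝ qb σ' : ℝ))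
    (τ₁ τ₂ : ℝ) (hτ₁ : 0 < τ₁) (hτ₂ : 0 < τ₂) (hττ : τ₁ * τ₂ < 1)
    (σ q : ℕ → H)
    (hstep1 : ∀ k, σ (k + 1) = PC (σ k - τ₁ • q k))
    (hstep2 : ∀ k, q (k + 1) = PK (q k + τ₂ • ((2 : ℝ) • σ (k + 1) - σ k))) :
    ∃ σs qs : H, σs ∈ C ∧ qs ∈ K ∧
      (∀ q' ∈ K, ∀ σ' ∈ C,
        (inner ℝ q' σs : ℝ) ≤ (inner ℝ qs σs : ℝ) ∧ (inner ℝ qs σs : ℝ) ≤ (inner ℝ qs σ' : ℝ)) ∧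
      (∀ y : H, Tendsto (fun k => (inner ℝ (σ k) y : ℝ)) atTop (nhds (inner ℝ σs y))) ∧
      (∀ y : H, Tendsto (fun k => (inner ℝ (q k) y : ℝ)) atTop (nhds (inner ℝ qs y))) := by
  have hseq : IsPrimalDualSeq C K τ₁ τ₂ σ q :=
    { pos_left := hτ₁
      pos_right := hτ₂
      mul_lt_one := hττ
      primal_mem := fun k => hstep1 k ▸ (hPC _).1
      dual_mem := fun k => hstep2 k ▸ (hPK _).1
      primal_le := fun k _ hz => hstep1 k ▸
        inner_sub_sub_nonpos_of_forall_dist_le hCconv (hPC _).1 (hPC _).2 hz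
      dual_le := fun k _ hw => hstep2 k ▸
        inner_sub_sub_nonpos_of_forall_dist_le hKconv (hPK _).1 (hPK _).2 hw }
  obtain ⟨σs, qs, hσs, hqs, hst, hσ, hq⟩ := hseq.exists_tendstoWeakly hCc hCconv hKc hKconv hσb hqb
    ((isSaddlePointOn_iff_forall_le_and_le hσb hqb).2 hsaddle)
  exact ⟨σs, qs, hσs, hqs, (isSaddlePointOn_iff_forall_le_and_le hσs hqs).1 hst, hσ, hq⟩

/-- (Theorem 3.2; Pock, Cremers, Bischof, Chambolle.)  Weak convergence of the primal-dual
proximal splitting iterates to a saddle point of the bilinear pairing `⟨q, σ⟩` over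
`C × 𝒦`, for nonempty closed convex sets `C, 𝒦` in a real Hilbert space, provided a saddle
point exists and `τ₁ τ₂ < 1`.  The metric projections `P_C, P_𝒦` are characterized as
nearest-point maps. -/
theorem primal_dual_weak_convergence
    {H : Type*} [NormedAddCommGroup H] [InnerProductSpace ℝ H] [CompleteSpace H]
    (C K : Set H)
    (hCne : C.Nonempty) (hCc : IsClosed C) (hCconv : Convex ℝ C)
    (hKne : K.Nonempty) (hKc : IsClosed K) (hKconv : Convex ℝ K)
    (PC PK : H → H)
    (hPC : ∀ x : H, PC x ∈ C ∧ ∀ y ∈ C, dist x (PC x) ≤ dist x y)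
    (hPK : ∀ x : H, PK x ∈ K ∧ ∀ y ∈ K, dist x (PK x) ≤ dist x y)
    (σb qb : H) (hσb : σb ∈ C) (hqb : qb ∈ K)
    (hsaddle : ∀ q' ∈ K, ∀ σ' ∈ C,
      (inner ℝ q' σb : ℝ) ≤ (inner ℝ qb σb : ℝ) ∧ (inner ℝ qb σb : ℝ) ≤ (inner ℝ qb σ' : ℝ))
    (τ₁ τ₂ : ℝ) (hτ₁ : 0 < τ₁) (hτ₂ : 0 < τ₂) (hττ : τ₁ * τ₂ < 1)
    (σ q : ℕ → H) (hσ0 : σ 0 ∈ C) (hq0 : q 0 ∈ K)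
    (hstep1 : ∀ k, σ (k + 1) = PC (σ k - τ₁ • q k))
    (hstep2 : ∀ k, q (k + 1) = PK (q k + τ₂ • ((2 : ℝ) • σ (k + 1) - σ k))) :
    ∃ σs qs : H, σs ∈ C ∧ qs ∈ K ∧
      (∀ q' ∈ K, ∀ σ' ∈ C,
        (inner ℝ q' σs : ℝ) ≤ (inner ℝ qs σs : ℝ) ∧ (inner ℝ qs σs : ℝ) ≤ (inner ℝ qs σ' : ℝ)) ∧
      (∀ y : H, Tendsto (fun k => (inner ℝ (σ k) y : ℝ)) atTop (nhds (inner ℝ σs y))) ∧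
      (∀ y : H, Tendsto (fun k => (inner ℝ (q k) y : ℝ)) atTop (nhds (inner ℝ qs y))) :=
  primal_dual_weak_convergence_general C K hCc hCconv hKc hKconv PC PK hPC hPK σb qb hσb hqb hsaddle
    τ₁ τ₂ hτ₁ hτ₂ hττ σ q hstep1 hstep2
end

section
/- Let d ≥ 1 and let (ā, b̄) ∈ ℝ × ℝ^d with ā + |b̄|²/2 > 0 and b̄ ≠ 0, where |·| is the Euclidean norm. Let μ > 0 be the largest real root of the cubic polynomial p(x) = x³/2 + (ā + 1)x − |b̄|. Then the point (−μ²/2, μ b̄/|b̄|) belongs to K and is the unique nearest point of K to (ā, b̄) in the Euclidean norm of ℝ^{1+d}; that is, it equals the metric projection of (ā, b̄) onto K. -/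
/-! The boundary point `q = (-‖w‖²/2, w)` of `K` has outward normal `(1, w)`.
If `(a, b) = q + λ (1, w)` with `λ ≥ 0`, the variational inequality `⟪(a, b) - q, x - q⟫ ≤ 0`
on `K` gives `|q - (a, b)|² + |x - q|² ≤ |x - (a, b)|²` for every `x ∈ K`, so `q` is the
unique nearest point. For `w = μ b/|b|` the normal condition `b - w = λ w` with
`λ = a + μ²/2` is exactly the cubic equation `μ (a + μ²/2) = |b| - μ`, and `λ ≥ 0` because
a root with `μ ≥ |b|` would force `(a, b) ∈ K`. -/

noncomputable section

/-- The Euclidean distance on `ℝ^{1+d} = ℝ × ℝ^d`. -/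
def euclDist {d : ℕ} (p q : ℝ × EuclideanSpace ℝ (Fin d)) : ℝ :=
  Real.sqrt ((p.1 - q.1) ^ 2 + ‖p.2 - q.2‖ ^ 2)

open RealInnerProductSpace

section InnerProductSpace

variable {E : Type*} [NormedAddCommGroup E] [InnerProductSpace ℝ E]

theorem inner_outward_normal_nonpos (w v : E) {c : ℝ} (h : c + ‖v‖ ^ 2 / 2 ≤ 0) :
    (c + ‖w‖ ^ 2 / 2) + ⟪w, v - w⟫ ≤ 0 := by
  have hvw : ‖v - w‖ ^ 2 = ‖v‖ ^ 2 - 2 * ⟪w, v⟫ + ‖w‖ ^ 2 := by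
    rw [norm_sub_sq_real, real_inner_comm]
  rw [inner_sub_right, real_inner_self_eq_norm_sq]
  nlinarith [sq_nonneg ‖v - w‖]

theorem sq_dist_add_sq_dist_le_of_normal {a c s lam : ℝ} {b v w : E} (hlam : 0 ≤ lam)
    (hs : s = -(‖w‖ ^ 2) / 2) (ha : a = s + lam) (hb : b = w + lam • w)
    (h : c + ‖v‖ ^ 2 / 2 ≤ 0) :
    ((s - a) ^ 2 + ‖w - b‖ ^ 2) + ((c - s) ^ 2 + ‖v - w‖ ^ 2) ≤ (c - a) ^ 2 + ‖v - b‖ ^ 2 := by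
  have hvb : ‖v - b‖ ^ 2 = ‖v - w‖ ^ 2 - 2 * lam * ⟪w, v - w⟫ + lam ^ 2 * ‖w‖ ^ 2 := by
    rw [hb, sub_add_eq_sub_sub, norm_sub_sq_real, inner_smul_right, real_inner_comm, norm_smul,
      Real.norm_eq_abs, mul_pow, sq_abs]
    ring
  have hwb : ‖w - b‖ ^ 2 = lam ^ 2 * ‖w‖ ^ 2 := by
    rw [hb, sub_add_cancel_left, norm_neg, norm_smul, Real.norm_eq_abs, mul_pow, sq_abs]
  rw [hvb, hwb, ha, hs]
  nlinarith [mul_nonpos_of_nonneg_of_nonpos hlam (inner_outward_normal_nonpos w v h)]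

end InnerProductSpace

section EuclDist

variable {d : ℕ}

theorem euclDist_sq (p q : ℝ × EuclideanSpace ℝ (Fin d)) :
    euclDist p q ^ 2 = (p.1 - q.1) ^ 2 + ‖p.2 - q.2‖ ^ 2 :=
  Real.sq_sqrt (by positivity)

theorem euclDist_nonneg (p q : ℝ × EuclideanSpace ℝ (Fin d)) : 0 ≤ euclDist p q :=
  Real.sqrt_nonneg _

theorem eq_of_euclDist_eq_zero {p q : ℝ × EuclideanSpace ℝ (Fin d)} (h : euclDist p q = 0) :
    p = q := by
  have hsq := euclDist_sq p q
  rw [h] at hsq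
  have h1 : p.1 - q.1 = 0 := by nlinarith [sq_nonneg (p.1 - q.1), sq_nonneg ‖p.2 - q.2‖]
  have h2 : ‖p.2 - q.2‖ = 0 := by nlinarith [sq_nonneg (p.1 - q.1), norm_nonneg (p.2 - q.2)]
  exact Prod.ext (sub_eq_zero.mp h1) (sub_eq_zero.mp (norm_eq_zero.mp h2))

theorem nearest_unique_of_pythagorean {S : Set (ℝ × EuclideanSpace ℝ (Fin d))}
    {p q : ℝ × EuclideanSpace ℝ (Fin d)}
    (h : ∀ x ∈ S, euclDist q p ^ 2 + euclDist x q ^ 2 ≤ euclDist x p ^ 2) (hq : q ∈ S) :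
    (∀ x ∈ S, euclDist q p ≤ euclDist x p) ∧
      ∀ x ∈ S, (∀ y ∈ S, euclDist x p ≤ euclDist y p) → x = q := by
  have hle : ∀ x ∈ S, euclDist q p ≤ euclDist x p := fun x hx =>
    (pow_le_pow_iff_left₀ (euclDist_nonneg q p) (euclDist_nonneg x p) two_ne_zero).mp
      (by nlinarith [h x hx])
  refine ⟨hle, fun x hx hmin => eq_of_euclDist_eq_zero ?_⟩
  have hxq : euclDist x p = euclDist q p := le_antisymm (hmin q hq) (hle x hx)
  have hx' := h x hx
  rw [hxq] at hx'
  exact pow_eq_zero_iff two_ne_zero |>.mp (le_antisymm (by linarith) (sq_nonneg _))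

end EuclDist

theorem add_sq_div_two_nonneg_of_cubic_root {a μ β : ℝ} (hβ : 0 ≤ β) (hK : 0 < a + β ^ 2 / 2)
    (hμ : 0 < μ) (hroot : μ ^ 3 / 2 + (a + 1) * μ - β = 0) : 0 ≤ a + μ ^ 2 / 2 := by
  by_contra! hneg
  have hβμ : β < μ := by nlinarith
  nlinarith [mul_self_lt_mul_self hβ hβμ]

section NormedSpace

variable {E : Type*} [NormedAddCommGroup E] [NormedSpace ℝ E] {a μ : ℝ}

theorem norm_div_norm_smul_self {b : E} (hb : b ≠ 0) (hμ : 0 ≤ μ) :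
    ‖(μ / ‖b‖) • b‖ = μ := by
  rw [norm_smul, Real.norm_eq_abs, abs_of_nonneg (div_nonneg hμ (norm_nonneg b)),
    div_mul_cancel₀ μ (norm_ne_zero_iff.mpr hb)]

theorem eq_div_norm_smul_add_smul_of_cubic_root {b : E} (hb : b ≠ 0)
    (hroot : μ ^ 3 / 2 + (a + 1) * μ - ‖b‖ = 0) :
    b = (μ / ‖b‖) • b + (a + μ ^ 2 / 2) • (μ / ‖b‖) • b := by
  have hβ : ‖b‖ ≠ 0 := norm_ne_zero_iff.mpr hb
  have hscalar : (1 + (a + μ ^ 2 / 2)) * (μ / ‖b‖) = 1 := by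
    field_simp
    linarith
  calc b = ((1 + (a + μ ^ 2 / 2)) * (μ / ‖b‖)) • b := by rw [hscalar, one_smul]
    _ = (μ / ‖b‖) • b + (a + μ ^ 2 / 2) • (μ / ‖b‖) • b := by
      rw [← smul_smul, add_smul, one_smul]

end NormedSpace

theorem projection_onto_K_general {d : ℕ}
    (a : ℝ) (b : EuclideanSpace ℝ (Fin d))
    (hK : 0 < a + ‖b‖ ^ 2 / 2) (hb : b ≠ 0)
    (μ : ℝ) (hμ : 0 < μ) (hroot : μ ^ 3 / 2 + (a + 1) * μ - ‖b‖ = 0) :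
    (-(μ ^ 2) / 2, (μ / ‖b‖) • b) ∈ Kset d ∧
    (∀ p ∈ Kset d,
      euclDist (-(μ ^ 2) / 2, (μ / ‖b‖) • b) (a, b) ≤ euclDist p (a, b)) ∧
    (∀ p ∈ Kset d,
      (∀ p' ∈ Kset d, euclDist p (a, b) ≤ euclDist p' (a, b)) →
      p = (-(μ ^ 2) / 2, (μ / ‖b‖) • b)) := by
  have hw : ‖(μ / ‖b‖) • b‖ = μ := norm_div_norm_smul_self hb hμ.le
  have hq : (-(μ ^ 2) / 2, (μ / ‖b‖) • b) ∈ Kset d := by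
    simp only [Kset, Set.mem_ofPred_eq, hw]
    linarith
  refine ⟨hq, nearest_unique_of_pythagorean (fun x hx => ?_) hq⟩
  simp only [euclDist_sq]
  exact sq_dist_add_sq_dist_le_of_normal
    (add_sq_div_two_nonneg_of_cubic_root (norm_nonneg b) hK hμ hroot) (by rw [hw]) (by ring)
    (eq_div_norm_smul_add_smul_of_cubic_root hb hroot) hx

/-- If `ā + |b̄|²/2 > 0` and `b̄ ≠ 0`, and `μ > 0` is the largest real root of
`p(x) = x³/2 + (ā+1)x − |b̄|`, then `(−μ²/2, μ b̄/|b̄|)` belongs to `K` and is the unique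
nearest point of `K` to `(ā, b̄)` in the Euclidean norm of `ℝ^{1+d}`, i.e. it is the metric
projection of `(ā, b̄)` onto `K`. -/
theorem projection_onto_K {d : ℕ} (hd : 1 ≤ d)
    (a : ℝ) (b : EuclideanSpace ℝ (Fin d))
    (hK : 0 < a + ‖b‖ ^ 2 / 2) (hb : b ≠ 0)
    (μ : ℝ) (hμ : 0 < μ) (hroot : μ ^ 3 / 2 + (a + 1) * μ - ‖b‖ = 0)
    (hmax : ∀ y : ℝ, y ^ 3 / 2 + (a + 1) * y - ‖b‖ = 0 → y ≤ μ) :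
    (-(μ ^ 2) / 2, (μ / ‖b‖) • b) ∈ Kset d ∧
    (∀ p ∈ Kset d,
      euclDist (-(μ ^ 2) / 2, (μ / ‖b‖) • b) (a, b) ≤ euclDist p (a, b)) ∧
    (∀ p ∈ Kset d,
      (∀ p' ∈ Kset d, euclDist p (a, b) ≤ euclDist p' (a, b)) →
      p = (-(μ ^ 2) / 2, (μ / ‖b‖) • b)) :=
  projection_onto_K_general a b hK hb μ hμ hroot
end
end

section
/- Let Ω ⊂ ℝ^N be compact, equipped with Lebesgue measure, let d ≥ 1 and set n = 1 + d. For every σ ∈ L²(Ω; ℝ^n), the supremum of ∫_Ω q · σ over continuous functions q : Ω → ℝ^n with q(x) ∈ K for all x ∈ Ω equals the supremum of ∫_Ω q · σ over q ∈ L²(Ω; ℝ^n) with q(x) ∈ K for a.e. x ∈ Ω, where both suprema are taken in [0,+∞]. -/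
/-!
Continuous `K`-valued maps are dense, in `L²(Ω)`, among the `L²` maps taking values a.e. in `K`:
approximate `q` by continuous maps `g`, then push them into `K` with a Lipschitz retraction `T`
(the metric projection for some Euclidean structure). Since `q = T ∘ q` a.e., the error is
at most `Lip(T) · ‖q - g‖₂`. The functional `q ↦ ∫ q · σ` is continuous on `L²` because
`σ ∈ L²`, so both suprema agree.
-/

open MeasureTheory ENNReal NNReal Filter Topology

noncomputable section

theorem exists_lipschitzWith_one_retraction_of_convex {F : Type*} [NormedAddCommGroup F]
    [InnerProductSpace ℝ F] [CompleteSpace F] {K : Set F} (hne : K.Nonempty) (hcl : IsClosed K)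
    (hconv : Convex ℝ K) :
    ∃ P : F → F, LipschitzWith 1 P ∧ (∀ x, P x ∈ K) ∧ ∀ x ∈ K, P x = x := by
  choose P hPK hPmin using exists_norm_eq_iInf_of_complete_convex hne hcl.isComplete hconv
  have hvar (x : F) : ∀ w ∈ K, inner ℝ (x - P x) (w - P x) ≤ 0 :=
    (norm_eq_iInf_iff_real_inner_le_zero hconv (hPK x)).1 (hPmin x)
  refine ⟨P, LipschitzWith.of_dist_le_mul fun x y => ?_, hPK, fun x hx => ?_⟩
  · -- Add the variational inequalities at `x` and at `y`, then apply Cauchy–Schwarz.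
    have hsq : ‖P x - P y‖ ^ 2 ≤ inner ℝ (x - y) (P x - P y) := by
      have hx := hvar x (P y) (hPK y)
      have hy := hvar y (P x) (hPK x)
      rw [← neg_sub (P x) (P y), inner_neg_right] at hx
      have hxy : x - y = (x - P x) - (y - P y) + (P x - P y) := by abel
      rw [hxy, inner_add_left, inner_sub_left, real_inner_self_eq_norm_sq]
      linarith
    have hcs := real_inner_le_norm (x - y) (P x - P y)
    rw [NNReal.coe_one, one_mul, dist_eq_norm, dist_eq_norm]
    nlinarith [norm_nonneg (x - y), norm_nonneg (P x - P y)]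
  · have := hvar x x hx
    rwa [real_inner_self_nonpos, sub_eq_zero, eq_comm] at this

theorem exists_lipschitz_retraction_of_convex {E : Type*} [NormedAddCommGroup E]
    [NormedSpace ℝ E] [FiniteDimensional ℝ E] {K : Set E} (hne : K.Nonempty) (hcl : IsClosed K)
    (hconv : Convex ℝ K) :
    ∃ (C : ℝ≥0) (T : E → E), LipschitzWith C T ∧ (∀ x, T x ∈ K) ∧ ∀ x ∈ K, T x = x := by
  obtain ⟨k, hk⟩ := hne
  let e : E ≃L[ℝ] EuclideanSpace ℝ (Fin (Module.finrank ℝ E)) :=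
    .ofFinrankEq finrank_euclideanSpace_fin.symm
  obtain ⟨P, hPlip, hPK, hPfix⟩ := exists_lipschitzWith_one_retraction_of_convex
    (K := e.symm ⁻¹' K) ⟨e k, by simpa using hk⟩ (hcl.preimage e.symm.continuous)
    (hconv.linear_preimage e.symm.toLinearEquiv.toLinearMap)
  refine ⟨_, e.symm ∘ P ∘ e, (e.symm.lipschitz.comp hPlip).comp e.lipschitz,
    fun x => hPK (e x), fun x hx => ?_⟩
  simp [hPfix (e x) (by simpa using hx)]

namespace MeasureTheory

variable {α E : Type*} [TopologicalSpace α] [NormalSpace α] [MeasurableSpace α] [BorelSpace α]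
  [NormedAddCommGroup E] [NormedSpace ℝ E] {μ : Measure α} [μ.WeaklyRegular] {p : ℝ≥0∞}

theorem MemLp.exists_seq_continuous_comp_tendsto_eLpNorm_sub {T : E → E} {C : ℝ≥0}
    (hT : LipschitzWith C T) (hp : p ≠ ∞) {f : α → E} (hf : MemLp f p μ)
    (hfT : ∀ᵐ x ∂μ, T (f x) = f x) :
    ∃ g : ℕ → α → E, (∀ n, Continuous (g n)) ∧
      Tendsto (fun n => eLpNorm (T ∘ g n - f) p μ) atTop (𝓝 0) := by
  choose g hg _ using fun n : ℕ =>
    hf.exists_boundedContinuous_eLpNorm_sub_le hp (ENNReal.inv_ne_zero.2 (natCast_ne_top n))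
  refine ⟨fun n => g n, fun n => (g n).continuous, ?_⟩
  have hbound (n : ℕ) : eLpNorm (T ∘ g n - f) p μ ≤ C * (n : ℝ≥0∞)⁻¹ := by
    have hpt : ∀ᵐ x ∂μ, ‖(T ∘ g n - f) x‖₊ ≤ C * ‖(f - ⇑(g n)) x‖₊ := by
      filter_upwards [hfT] with x hx
      have := hT.nndist_le (g n x) (f x)
      rwa [hx, nndist_eq_nnnorm, nndist_comm, nndist_eq_nnnorm] at this
    calc eLpNorm (T ∘ g n - f) p μ ≤ C • eLpNorm (f - ⇑(g n)) p μ :=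
          eLpNorm_le_nnreal_smul_eLpNorm_of_ae_le_mul hpt p
      _ ≤ C * (n : ℝ≥0∞)⁻¹ := by rw [ENNReal.smul_def, smul_eq_mul]; gcongr; exact hg n
  refine tendsto_of_tendsto_of_tendsto_of_le_of_le tendsto_const_nhds ?_ (fun _ => bot_le)
    hbound
  simpa using ENNReal.Tendsto.const_mul ENNReal.tendsto_inv_nat_nhds_zero (.inr coe_ne_top)

theorem MemLp.exists_seq_continuous_mem_tendsto_eLpNorm_sub [FiniteDimensional ℝ E] {K : Set E}
    (hne : K.Nonempty) (hcl : IsClosed K) (hconv : Convex ℝ K) (hp : p ≠ ∞) {f : α → E}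
    (hf : MemLp f p μ) (hfK : ∀ᵐ x ∂μ, f x ∈ K) :
    ∃ g : ℕ → α → E, (∀ n, Continuous (g n) ∧ ∀ x, g n x ∈ K) ∧
      Tendsto (fun n => eLpNorm (g n - f) p μ) atTop (𝓝 0) := by
  obtain ⟨C, T, hTlip, hTK, hTfix⟩ := exists_lipschitz_retraction_of_convex hne hcl hconv
  obtain ⟨g, hg, hgf⟩ := hf.exists_seq_continuous_comp_tendsto_eLpNorm_sub hTlip hp
    (hfK.mono fun x hx => hTfix _ hx)
  exact ⟨fun n => T ∘ g n, fun n => ⟨hTlip.continuous.comp (hg n), fun x => hTK _⟩, hgf⟩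

end MeasureTheory

theorem ContinuousOn.memLp_restrict_of_isCompact {X E : Type*} [TopologicalSpace X] [T2Space X]
    [MeasurableSpace X] [OpensMeasurableSpace X] [NormedAddCommGroup E] {μ : Measure X}
    [IsFiniteMeasureOnCompacts μ] {s : Set X} {f : X → E} {p : ℝ≥0∞} (hf : ContinuousOn f s)
    (hs : IsCompact s) : MemLp f p (μ.restrict s) := by
  have : IsFiniteMeasure (μ.restrict s) := isFiniteMeasure_restrict.2 hs.measure_lt_top.ne
  obtain ⟨C, hC⟩ := hs.exists_bound_of_continuousOn hf
  exact .of_bound (hf.aestronglyMeasurable_of_isCompact hs hs.measurableSet) C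
    ((ae_restrict_iff' hs.measurableSet).2 (.of_forall hC))

theorem tendsto_integral_bilin_of_tendsto_eLpNorm {α ι E F G : Type*} [MeasurableSpace α]
    {μ : Measure α} [NormedAddCommGroup E] [NormedSpace ℝ E] [NormedAddCommGroup F]
    [NormedSpace ℝ F] [NormedAddCommGroup G] [NormedSpace ℝ G] [CompleteSpace G]
    {p q : ℝ≥0∞} [Fact (1 ≤ p)] [Fact (1 ≤ q)] [p.HolderConjugate q] (B : E →L[ℝ] F →L[ℝ] G)
    {l : Filter ι} {f : ι → α → E} {f₀ : α → E} {g : α → F} (hf : ∀ i, MemLp (f i) p μ)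
    (hf₀ : MemLp f₀ p μ) (hg : MemLp g q μ)
    (hlim : Tendsto (fun i => eLpNorm (f i - f₀) p μ) l (𝓝 0)) :
    Tendsto (fun i => ∫ x, B (f i x) (g x) ∂μ) l (𝓝 (∫ x, B (f₀ x) (g x) ∂μ)) := by
  have hpair {h : α → E} (hh : MemLp h p μ) :
      B.lpPairing μ p q (hh.toLp h) (hg.toLp g) = ∫ x, B (h x) (g x) ∂μ := by
    rw [B.lpPairing_eq_integral]
    refine integral_congr_ae ?_
    filter_upwards [hh.coeFn_toLp, hg.coeFn_toLp] with x hhx hgx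
    rw [hhx, hgx]
  have hLp := (Lp.tendsto_Lp_iff_tendsto_eLpNorm'' f hf f₀ hf₀).2 hlim
  simpa only [Function.comp_def, ContinuousLinearMap.flip_apply, hpair] using
    (((B.lpPairing μ p q).flip (hg.toLp g)).continuous.tendsto _).comp hLp

theorem convex_Kset (d : ℕ) : Convex ℝ (Kset d) := by
  have hsq : ConvexOn ℝ Set.univ fun p : ℝ × EuclideanSpace ℝ (Fin d) => ‖p.2‖ ^ 2 :=
    ((convexOn_norm convex_univ).pow (fun _ _ => norm_nonneg _) 2).comp_linearMap
      (LinearMap.snd ℝ ℝ _)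
  have hfst : ConvexOn ℝ Set.univ fun p : ℝ × EuclideanSpace ℝ (Fin d) => p.1 :=
    (LinearMap.fst ℝ ℝ (EuclideanSpace ℝ (Fin d))).convexOn convex_univ
  convert (hfst.add (hsq.smul (c := (2 : ℝ)⁻¹) (by norm_num))).convex_le 0 using 1
  ext p
  simp [Kset, div_eq_inv_mul]

theorem isClosed_Kset (d : ℕ) : IsClosed (Kset d) :=
  isClosed_le (continuous_fst.add ((continuous_snd.norm.pow 2).div_const 2)) continuous_const

theorem zero_mem_Kset (d : ℕ) : (0 : ℝ × EuclideanSpace ℝ (Fin d)) ∈ Kset d := by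
  simp [Kset]

def prodPairing (d : ℕ) :
    (ℝ × EuclideanSpace ℝ (Fin d)) →L[ℝ] (ℝ × EuclideanSpace ℝ (Fin d)) →L[ℝ] ℝ :=
  (ContinuousLinearMap.mul ℝ ℝ).bilinearComp (.fst ℝ ℝ _) (.fst ℝ ℝ _) +
    (innerSL ℝ).bilinearComp (.snd ℝ ℝ _) (.snd ℝ ℝ _)

theorem prodPairing_apply {d : ℕ} (p z : ℝ × EuclideanSpace ℝ (Fin d)) :
    prodPairing d p z = p.1 * z.1 + ∑ i, p.2 i * z.2 i := by
  simp [prodPairing, PiLp.inner_apply, mul_comm]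

theorem sup_continuous_eq_sup_L2_general {N : ℕ} (Ω : Set (EuclideanSpace ℝ (Fin N)))
    (hΩ : IsCompact Ω) {d : ℕ}
    (σ : EuclideanSpace ℝ (Fin N) → ℝ × EuclideanSpace ℝ (Fin d))
    (hσ : MemLp σ 2 (volume.restrict Ω)) :
    (⨆ (q : EuclideanSpace ℝ (Fin N) → ℝ × EuclideanSpace ℝ (Fin d))
        (_ : ContinuousOn q Ω ∧ ∀ x ∈ Ω, q x ∈ Kset d),
      ENNReal.ofReal (∫ x in Ω, ((q x).1 * (σ x).1 + ∑ i, (q x).2 i * (σ x).2 i)))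
    =
    ⨆ (q : EuclideanSpace ℝ (Fin N) → ℝ × EuclideanSpace ℝ (Fin d))
        (_ : MemLp q 2 (volume.restrict Ω) ∧ ∀ᵐ x ∂(volume.restrict Ω), q x ∈ Kset d),
      ENNReal.ofReal (∫ x in Ω, ((q x).1 * (σ x).1 + ∑ i, (q x).2 i * (σ x).2 i)) := by
  have : (volume.restrict Ω).WeaklyRegular :=
    .restrict_of_measure_ne_top hΩ.measure_lt_top.ne
  simp only [← prodPairing_apply]
  apply le_antisymm
  · exact iSup₂_le fun q ⟨hq, hqK⟩ => le_iSup₂_of_le q ⟨hq.memLp_restrict_of_isCompact hΩ,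
      (ae_restrict_iff' hΩ.measurableSet).2 (.of_forall hqK)⟩ le_rfl
  · refine iSup₂_le fun q ⟨hq, hqK⟩ => ?_
    obtain ⟨g, hg, hgq⟩ := hq.exists_seq_continuous_mem_tendsto_eLpNorm_sub
      ⟨0, zero_mem_Kset d⟩ (isClosed_Kset d) (convex_Kset d) ofNat_ne_top hqK
    have hlim := tendsto_integral_bilin_of_tendsto_eLpNorm (prodPairing d)
      (fun n => (hg n).1.continuousOn.memLp_restrict_of_isCompact hΩ) hq hσ hgq
    exact le_of_tendsto' ((continuous_ofReal.tendsto _).comp hlim) fun n =>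
      le_iSup₂_of_le (g n) ⟨(hg n).1.continuousOn, fun x _ => (hg n).2 x⟩ le_rfl

/-- For `σ ∈ L²(Ω; ℝ^{1+d})` on a compact set `Ω ⊂ ℝ^N` with Lebesgue measure, the supremum
(in `[0,∞]`) of `∫_Ω q·σ` over continuous `q` with values in `K` equals the supremum over
`q ∈ L²(Ω; ℝ^{1+d})` with values a.e. in `K`. -/
theorem sup_continuous_eq_sup_L2 {N : ℕ} (Ω : Set (EuclideanSpace ℝ (Fin N)))
    (hΩ : IsCompact Ω) {d : ℕ} (hd : 1 ≤ d)
    (σ : EuclideanSpace ℝ (Fin N) → ℝ × EuclideanSpace ℝ (Fin d))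
    (hσ : MemLp σ 2 (volume.restrict Ω)) :
    (⨆ (q : EuclideanSpace ℝ (Fin N) → ℝ × EuclideanSpace ℝ (Fin d))
        (_ : ContinuousOn q Ω ∧ ∀ x ∈ Ω, q x ∈ Kset d),
      ENNReal.ofReal (∫ x in Ω, ((q x).1 * (σ x).1 + ∑ i, (q x).2 i * (σ x).2 i)))
    =
    ⨆ (q : EuclideanSpace ℝ (Fin N) → ℝ × EuclideanSpace ℝ (Fin d))
        (_ : MemLp q 2 (volume.restrict Ω) ∧ ∀ᵐ x ∂(volume.restrict Ω), q x ∈ Kset d),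
      ENNReal.ofReal (∫ x in Ω, ((q x).1 * (σ x).1 + ∑ i, (q x).2 i * (σ x).2 i)) :=
  sup_continuous_eq_sup_L2_general Ω hΩ σ hσ

end
end
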